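/- The space of Leibniz 2-cocycles ZL²(NF^n, NF^n) has dimension n² - 1. -/

import Mathlib

variable (K : Type*) [Field K] [CharZero K]

/-- The bracket of the null-filiform Leibniz algebra `NF^n` in the (zero-indexed)
basis `x_{i+1} = Pi.single i 1`: `[x_i, x_1] = x_{i+1}`, all other products of
basis vectors zero. -/
def nfF (n : ℕ) (u v : Fin n → K) : Fin n → K :=
  fun k => if h : 0 < (k : ℕ) then
    v ⟨0, k.pos⟩ * u ⟨(k : ℕ) - 1, lt_of_le_of_lt (Nat.sub_le _ _) k.isLt⟩
  else 0

/-- The bracket of `NF^n` as a bilinear map. -/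
noncomputable def nfb (n : ℕ) :
    (Fin n → K) →ₗ[K] (Fin n → K) →ₗ[K] (Fin n → K) :=
  LinearMap.mk₂ K (nfF K n)
    (fun u u' v => by funext k; simp only [nfF, Pi.add_apply]; split_ifs <;> ring)
    (fun c u v => by
      funext k; simp only [nfF, Pi.smul_apply, smul_eq_mul]; split_ifs <;> ring)
    (fun u v v' => by funext k; simp only [nfF, Pi.add_apply]; split_ifs <;> ring)
    (fun c u v => by
      funext k; simp only [nfF, Pi.smul_apply, smul_eq_mul]; split_ifs <;> ring)

/-- The Leibniz 2-cocycle condition `d²φ = 0` on `NF^n` with coefficients in itself. -/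
def IsCocycle (n : ℕ) (φ : (Fin n → K) →ₗ[K] (Fin n → K) →ₗ[K] (Fin n → K)) : Prop :=
  ∀ x y z : Fin n → K,
    nfb K n x (φ y z) - nfb K n (φ x y) z + nfb K n (φ x z) y
      + φ x (nfb K n y z) - φ (nfb K n x y) z + φ (nfb K n x z) y = 0

/-- The space `ZL²(NF^n, NF^n)` of Leibniz 2-cocycles. -/
noncomputable def ZL2 (n : ℕ) :
    Submodule K ((Fin n → K) →ₗ[K] (Fin n → K) →ₗ[K] (Fin n → K)) where
  carrier := {φ | IsCocycle K n φ}
  add_mem' := by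
    intro φ ψ hφ hψ x y z
    have h1 := hφ x y z
    have h2 := hψ x y z
    simp only [LinearMap.add_apply, map_add] at *
    linear_combination h1 + h2
  zero_mem' := by intro x y z; simp
  smul_mem' := by
    intro c φ hφ x y z
    have h := hφ x y z
    simp only [LinearMap.smul_apply, map_smul] at *
    linear_combination (norm := module) c • h

/-- shift operator -/
def Sm (n : ℕ) : (Fin n → K) →ₗ[K] (Fin n → K) where
  toFun x := fun k => if h : 0 < (k : ℕ) then
    x ⟨(k : ℕ) - 1, lt_of_le_of_lt (Nat.sub_le _ _) k.isLt⟩ else 0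
  map_add' u v := by
    funext k; simp only [Pi.add_apply]; split_ifs <;> simp
  map_smul' c u := by
    funext k; simp only [Pi.smul_apply, smul_eq_mul]; split_ifs <;> simp

variable {n : ℕ} [NeZero n]

lemma Sm_apply_zero (x : Fin n → K) : Sm K n x 0 = 0 := by
  simp [Sm]

lemma nfF_eq (x y : Fin n → K) : nfF K n x y = y 0 • Sm K n x := by
  funext k
  simp only [nfF, Sm, LinearMap.coe_mk, AddHom.coe_mk, Pi.smul_apply, smul_eq_mul]
  split_ifs with h
  · congr 1
  · ring

lemma Sm_single (j : Fin n) (h : (j : ℕ) + 1 < n) :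
    Sm K n (Pi.single j 1) = Pi.single (⟨(j:ℕ)+1, h⟩ : Fin n) (1:K) := by
  funext k
  simp only [Sm, LinearMap.coe_mk, AddHom.coe_mk, Pi.single_apply, Fin.ext_iff]
  split_ifs <;> first | rfl | omega

lemma Sm_single_last (h : n - 1 < n) :
    Sm K n (Pi.single (⟨n-1, h⟩ : Fin n) 1) = 0 := by
  funext k
  simp only [Sm, LinearMap.coe_mk, AddHom.coe_mk, Pi.single_apply, Fin.ext_iff, Pi.zero_apply]
  split_ifs <;> first | rfl | omega

def rowM (M : Fin n → Fin n → K) : (Fin n → K) →ₗ[K] (Fin n → K) where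
  toFun x := fun k => ∑ j, x j * M j k
  map_add' u v := by
    funext k; simp [Pi.add_apply, add_mul, Finset.sum_add_distrib]
  map_smul' c u := by
    funext k; simp [Finset.mul_sum, mul_assoc]

def betaM (M : Fin n → Fin n → K) : (Fin n → K) →ₗ[K] K where
  toFun y := ∑ j : Fin n, if h : (j : ℕ) + 1 < n then y ⟨(j:ℕ)+1, h⟩ * M j 0 else 0
  map_add' u v := by
    rw [← Finset.sum_add_distrib]
    refine Finset.sum_congr rfl fun j _ => ?_
    split_ifs <;> simp [add_mul]
  map_smul' c u := by
    simp only [RingHom.id_apply, smul_eq_mul, Finset.mul_sum]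
    refine Finset.sum_congr rfl fun j _ => ?_
    split_ifs <;> simp [Pi.smul_apply, mul_assoc]

lemma rowM_single (M : Fin n → Fin n → K) (i : Fin n) :
    rowM K M (Pi.single i 1) = M i := by
  funext k
  simp [rowM, Pi.single_apply, ite_mul]

lemma betaM_single_zero (M : Fin n → Fin n → K) :
    betaM K M (Pi.single (0 : Fin n) 1) = 0 := by
  simp only [betaM, LinearMap.coe_mk, AddHom.coe_mk]
  refine Finset.sum_eq_zero fun j _ => ?_
  split_ifs with h
  · rw [Pi.single_apply, if_neg (by intro h'; have := congrArg Fin.val h'; simp at this)]; ring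
  · rfl

lemma betaM_Sm (hn : 2 ≤ n) (M : Fin n → Fin n → K)
    (hM : M ⟨n-1, by omega⟩ 0 = 0) (y : Fin n → K) :
    betaM K M (Sm K n y) = rowM K M y 0 := by
  simp only [betaM, rowM, LinearMap.coe_mk, AddHom.coe_mk]
  refine Finset.sum_congr rfl fun j _ => ?_
  split_ifs with h
  · simp only [Sm, LinearMap.coe_mk, AddHom.coe_mk]
    rw [dif_pos (by simp : 0 < ((⟨(j:ℕ)+1, h⟩ : Fin n) : ℕ))]
    congr 2
  · have hj : j = ⟨n-1, by omega⟩ := by ext; simp; omega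
    rw [hj, hM, mul_zero]


lemma nfb_apply (x y : Fin n → K) : nfb K n x y = y 0 • Sm K n x := by
  rw [show nfb K n x y = nfF K n x y from rfl, nfF_eq]

noncomputable def phiM (M : Fin n → Fin n → K) :
    (Fin n → K) →ₗ[K] (Fin n → K) →ₗ[K] (Fin n → K) :=
  LinearMap.mk₂ K (fun x y => y 0 • rowM K M x - betaM K M y • Sm K n x)
    (fun x x' y => by simp only [map_add]; module)
    (fun c x y => by simp only [map_smul]; module)
    (fun x y y' => by simp only [map_add, Pi.add_apply]; module)
    (fun c y y' => by simp only [map_smul, Pi.smul_apply, smul_eq_mul]; module)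

lemma phiM_apply (M : Fin n → Fin n → K) (x y : Fin n → K) :
    phiM K M x y = y 0 • rowM K M x - betaM K M y • Sm K n x := rfl


lemma mem_ZL2_iff (φ : (Fin n → K) →ₗ[K] (Fin n → K) →ₗ[K] (Fin n → K)) :
    φ ∈ ZL2 K n ↔ IsCocycle K n φ := Iff.rfl

lemma phiM_mem (hn : 2 ≤ n) (M : Fin n → Fin n → K)
    (hM : M ⟨n-1, by omega⟩ 0 = 0) : phiM K M ∈ ZL2 K n := by
  intro x y z
  have hβ : ∀ w : Fin n → K, betaM K M (Sm K n w) = rowM K M w 0 := betaM_Sm K hn M hM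
  simp only [nfb_apply, phiM_apply, map_smul, map_sub, LinearMap.smul_apply,
    LinearMap.sub_apply, LinearMap.add_apply, Pi.smul_apply, Pi.sub_apply,
    smul_eq_mul, Sm_apply_zero, hβ, mul_zero, zero_smul, sub_zero, smul_zero, zero_mul,
    zero_sub, sub_self]
  module


lemma coc_zz (hn : 2 ≤ n) (φ : (Fin n → K) →ₗ[K] (Fin n → K) →ₗ[K] (Fin n → K))
    (hφ : IsCocycle K n φ) {y z : Fin n → K} (hy : y 0 = 0) (hz : z 0 = 0) :
    φ y z 0 = 0 := by
  have H := hφ (Pi.single 0 1) y z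
  simp only [nfb_apply, hy, hz, Pi.single_eq_same, zero_smul, map_zero, smul_zero,
    LinearMap.map_zero, LinearMap.zero_apply, add_zero, sub_zero, zero_sub, zero_add,
    one_smul, neg_zero, neg_eq_zero] at H
  have H1 := congrFun H ⟨1, by omega⟩
  simpa [Sm, Pi.single_apply, Fin.ext_iff, (Fin.lt_def.mpr (by rw [Fin.val_zero]; exact Nat.one_pos) : (0 : Fin n) < ⟨1, by omega⟩)] using H1

lemma Sm_e0 (hn : 2 ≤ n) :
    Sm K n (Pi.single (0 : Fin n) (1:K)) = Pi.single (⟨1, by omega⟩ : Fin n) (1:K) := by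
  have h : ((0 : Fin n) : ℕ) + 1 < n := by simp; omega
  have := Sm_single K (0 : Fin n) h
  convert this using 3 <;> simp

lemma coc_e1 (hn : 2 ≤ n) (φ : (Fin n → K) →ₗ[K] (Fin n → K) →ₗ[K] (Fin n → K))
    (hφ : IsCocycle K n φ) (x : Fin n → K) :
    φ x (Pi.single (⟨1, by omega⟩ : Fin n) 1)
      = -(φ (Pi.single 0 1) (Pi.single 0 1) 0) • Sm K n x := by
  have H := hφ x (Pi.single (0:Fin n) 1) (Pi.single (0:Fin n) 1)
  simp only [nfb_apply, Pi.single_eq_same, one_smul, Sm_e0 K hn] at H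
  linear_combination (norm := module) H

lemma coc_E1 (hn : 2 ≤ n) (φ : (Fin n → K) →ₗ[K] (Fin n → K) →ₗ[K] (Fin n → K))
    (hφ : IsCocycle K n φ) (x z : Fin n → K) (hz : z 0 = 0) :
    φ (Sm K n x) z = Sm K n (φ x z) + (φ (Pi.single 0 1) z 0) • Sm K n x := by
  have H := hφ x (Pi.single (0:Fin n) 1) z
  simp only [nfb_apply, hz, Pi.single_eq_same, one_smul, zero_smul, smul_zero, map_zero,
    LinearMap.map_zero, LinearMap.zero_apply, sub_zero, add_zero, zero_add] at H
  linear_combination (norm := module) (-1 : K) • H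

lemma coc_S0 (hn : 2 ≤ n) (φ : (Fin n → K) →ₗ[K] (Fin n → K) →ₗ[K] (Fin n → K))
    (hφ : IsCocycle K n φ) (x y : Fin n → K) (hy : y 0 = 0) :
    φ x (Sm K n y) 0 = 0 := by
  have H := hφ x y (Pi.single (0:Fin n) 1)
  simp only [nfb_apply, hy, Pi.single_eq_same, one_smul, zero_smul, smul_zero, map_zero,
    LinearMap.map_zero, LinearMap.zero_apply, sub_zero, add_zero, zero_add] at H
  have hzz : φ (Sm K n x) y 0 = 0 := coc_zz K hn φ hφ (Sm_apply_zero K x) hy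
  have H0 := congrFun H 0
  simp only [Pi.add_apply, Pi.sub_apply, Pi.smul_apply, Pi.zero_apply, smul_eq_mul,
    Sm_apply_zero, mul_zero, hzz, zero_sub, add_zero, zero_add, sub_zero, neg_zero,
    neg_add_eq_zero, neg_eq_zero] at H0
  exact H0


lemma coc_z0 (hn : 2 ≤ n) (φ : (Fin n → K) →ₗ[K] (Fin n → K) →ₗ[K] (Fin n → K))
    (hφ : IsCocycle K n φ) (x z : Fin n → K) (hz : z 0 = 0) :
    φ x z 0 = 0 := by
  set y : Fin n → K := fun k =>
    if h : 0 < (k:ℕ) ∧ (k:ℕ)+1 < n then z ⟨(k:ℕ)+1, h.2⟩ else 0 with hydef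
  have hy0 : y 0 = 0 := by simp [hydef]
  have hdec : z = z ⟨1, by omega⟩ • (Pi.single (⟨1, by omega⟩ : Fin n) 1 : Fin n → K) + Sm K n y := by
    funext k
    simp only [Pi.add_apply, Pi.smul_apply, Pi.single_apply, smul_eq_mul, Sm,
      LinearMap.coe_mk, AddHom.coe_mk, hydef, Fin.ext_iff]
    rcases k with ⟨kv, hk⟩
    simp only
    rcases Nat.lt_or_ge kv 2 with h2 | h2
    · interval_cases kv
      · rw [if_neg (by omega), dif_neg (by omega)]
        simpa using hz
      · rw [if_pos rfl, dif_pos (by omega), dif_neg (by omega)]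
        ring
    · rw [if_neg (by omega), dif_pos (by omega), dif_pos (by omega)]
      have : kv - 1 + 1 = kv := by omega
      simp [this]
  have h1 : φ x (Pi.single (⟨1, by omega⟩ : Fin n) 1) 0 = 0 := by
    rw [coc_e1 K hn φ hφ x]
    simp [Sm_apply_zero]
  calc φ x z 0 = z ⟨1, by omega⟩ * φ x (Pi.single (⟨1, by omega⟩ : Fin n) 1) 0
        + φ x (Sm K n y) 0 := by
        conv_lhs => rw [hdec]
        simp [map_add, map_smul]
    _ = 0 := by rw [h1, coc_S0 K hn φ hφ x y hy0]; ring

lemma coc_last (hn : 2 ≤ n) (φ : (Fin n → K) →ₗ[K] (Fin n → K) →ₗ[K] (Fin n → K))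
    (hφ : IsCocycle K n φ) :
    φ (Pi.single (⟨n-1, by omega⟩ : Fin n) 1) (Pi.single 0 1) 0 = 0 := by
  set el : Fin n → K := Pi.single (⟨n-1, by omega⟩ : Fin n) 1 with heldef
  have hel0 : el 0 = 0 := by
    rw [heldef, Pi.single_apply, if_neg (by simp [Fin.ext_iff]; omega)]
  have H := hφ (Pi.single (0:Fin n) 1) el (Pi.single (0:Fin n) 1)
  simp only [nfb_apply, hel0, Pi.single_eq_same, one_smul, zero_smul, smul_zero, map_zero,
    LinearMap.map_zero, LinearMap.zero_apply, sub_zero, add_zero, zero_add] at H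
  rw [heldef, Sm_single_last K (by omega), map_zero, add_zero,
    coc_E1 K hn φ hφ (Pi.single (0:Fin n) 1) _ (by rw [← heldef]; exact hel0)] at H
  have h2 : φ (Pi.single 0 1) el 0 = 0 :=
    coc_z0 K hn φ hφ _ _ hel0
  rw [← heldef] at H
  rw [h2, zero_smul, add_zero] at H
  have H1 := congrFun H ⟨1, by omega⟩
  simp only [Pi.add_apply, Pi.sub_apply, Pi.smul_apply, Pi.zero_apply, smul_eq_mul] at H1
  rw [Sm_e0 K hn] at H1
  simpa [Pi.single_apply] using H1


lemma coc_inj (hn : 2 ≤ n) (φ : (Fin n → K) →ₗ[K] (Fin n → K) →ₗ[K] (Fin n → K))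
    (hφ : IsCocycle K n φ)
    (h0 : ∀ i : Fin n, φ (Pi.single i 1) (Pi.single 0 1) = 0) : φ = 0 := by
  have hA : ∀ x, φ x (Pi.single 0 1) = 0 := by
    have hflip : (LinearMap.flip φ) (Pi.single 0 1) = 0 := by
      apply Module.Basis.ext (Pi.basisFun K (Fin n))
      intro i
      simp [LinearMap.flip_apply, h0 i]
    intro x
    have hx := LinearMap.congr_fun hflip x
    simpa [LinearMap.flip_apply] using hx
  have hstep : ∀ y : Fin n → K, (∀ x, φ x y = 0) → ∀ x, φ x (Sm K n y) = 0 := by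
    intro y hy x
    have H := hφ x y (Pi.single (0:Fin n) 1)
    simp only [nfb_apply, Pi.single_eq_same, one_smul, hy, hA, map_zero, Pi.zero_apply,
      LinearMap.map_zero, LinearMap.zero_apply, smul_zero, zero_smul, sub_zero, zero_sub,
      add_zero, zero_add, neg_zero, neg_eq_zero] at H
    exact H
  have hall : ∀ (m : ℕ) (hm : m < n) (x : Fin n → K),
      φ x (Pi.single (⟨m, hm⟩ : Fin n) 1) = 0 := by
    intro m
    induction m with
    | zero =>
      intro hm x
      have h00 : (⟨0, hm⟩ : Fin n) = 0 := by ext; simp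
      rw [h00]; exact hA x
    | succ m ih =>
      intro hm x
      have h1 : m < n := by omega
      have h2 := hstep (Pi.single (⟨m, h1⟩ : Fin n) 1) (ih h1) x
      rwa [Sm_single K (⟨m, h1⟩ : Fin n) (by simpa using hm)] at h2
  refine LinearMap.ext fun x => ?_
  simp only [LinearMap.zero_apply]
  apply Module.Basis.ext (Pi.basisFun K (Fin n))
  intro j
  simp only [Pi.basisFun_apply, LinearMap.zero_apply]
  have := hall j.val j.isLt x
  simpa using this

noncomputable def Tmap (n : ℕ) [NeZero n] :
    ((Fin n → K) →ₗ[K] (Fin n → K) →ₗ[K] (Fin n → K)) →ₗ[K] (Fin n → Fin n → K) where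
  toFun φ := fun i => φ (Pi.single i 1) (Pi.single 0 1)
  map_add' φ ψ := by funext i; simp [LinearMap.add_apply]
  map_smul' c φ := by funext i; simp [LinearMap.smul_apply]

set_option synthInstance.maxHeartbeats 1000000
set_option maxHeartbeats 1000000

/-- An auxiliary `AddCommGroup` instance on submodules of the space of bilinear maps
(the canonical one times out for this doubly-nested type). -/
noncomputable instance instACG (n : ℕ)
    (p : Submodule K ((Fin n → K) →ₗ[K] (Fin n → K) →ₗ[K] (Fin n → K))) :
    AddCommGroup p := Module.addCommMonoidToAddCommGroup K

/-- `dim ZL²(NF^n, NF^n) = n² - 1`. -/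
theorem dim_ZL2 (n : ℕ) (hn : 2 ≤ n) :
    Module.finrank K (ZL2 K n) = n ^ 2 - 1 := by
  haveI : NeZero n := ⟨by omega⟩
  set lastI : Fin n := ⟨n-1, by omega⟩ with hlastI
  set ev : (Fin n → Fin n → K) →ₗ[K] K :=
    { toFun := fun M => M lastI 0
      map_add' := fun a b => rfl
      map_smul' := fun c a => rfl } with hev
  set T' : ↥(ZL2 K n) →ₗ[K] (Fin n → Fin n → K) :=
    (Tmap K n).comp (ZL2 K n).subtype with hT'
  have hker : ∀ ψ : ZL2 K n, T' ψ = 0 → ψ = 0 := by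
    rintro ⟨φ, hφ⟩ h
    have h0 : ∀ i : Fin n, φ (Pi.single i 1) (Pi.single 0 1) = 0 := by
      intro i
      exact congrFun h i
    exact Subtype.ext (coc_inj K hn φ hφ h0)
  have hinj : Function.Injective T' :=
    LinearMap.ker_eq_bot.mp (LinearMap.ker_eq_bot'.mpr hker)
  have hrange : LinearMap.range T' = LinearMap.ker ev := by
    apply le_antisymm
    · rintro _ ⟨⟨φ, hφ⟩, rfl⟩
      simp only [LinearMap.mem_ker]
      show φ (Pi.single lastI 1) (Pi.single 0 1) 0 = 0
      exact coc_last K hn φ hφ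
    · intro M hM
      have hM' : M ⟨n-1, by omega⟩ 0 = 0 := hM
      refine ⟨⟨phiM K M, phiM_mem K hn M hM'⟩, ?_⟩
      funext i
      show phiM K M (Pi.single i 1) (Pi.single 0 1) = M i
      rw [phiM_apply, Pi.single_eq_same, one_smul, betaM_single_zero, zero_smul,
        sub_zero, rowM_single]
  have e1 : (ZL2 K n) ≃ₗ[K] LinearMap.range T' := LinearEquiv.ofInjective T' hinj
  have e2 : Module.finrank K (ZL2 K n) = Module.finrank K (LinearMap.ker ev) := by
    rw [← hrange]; exact e1.finrank_eq
  have hsurj : Function.Surjective ev := by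
    intro c
    refine ⟨c • (Pi.single lastI (Pi.single (0:Fin n) (1:K)) : Fin n → Fin n → K), ?_⟩
    simp [hev, Pi.single_eq_same]
  have hrk : Module.finrank K ↥(LinearMap.range ev) = 1 := by
    rw [LinearMap.range_eq_top.mpr hsurj, finrank_top, Module.finrank_self]
  have hadd := LinearMap.finrank_range_add_finrank_ker ev
  have hdom : Module.finrank K (Fin n → Fin n → K) = n * n := by
    rw [Module.finrank_pi_fintype]
    simp [Module.finrank_pi, Finset.sum_const, Finset.card_univ, Fintype.card_fin]
  have hsq : n ^ 2 = n * n := sq n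
  rw [e2]
  omega
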